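/- Theorem (nondegenerate case): Let 𝒜 ⊆ M(N,M) and ℬ ⊆ M(M,N) be finite sets of matrices such that det(AB) ≠ 0 for all A ∈ 𝒜, B ∈ ℬ, and suppose every sequence (A_n) ∈ 𝒜^∞ is ℬ-right-bounded (for each (A_n) there exist (B_n) ∈ ℬ^∞ and a constant C depending on (A_n) with ‖A_n B_n ⋯ A_1 B_1‖ ≤ C for all n). Then there exists a universal constant C > 0 such that for every sequence (A_n) ∈ 𝒜^∞ there is a sequence (B_n) ∈ ℬ^∞ with ‖A_n B_n ⋯ A_1 B_1‖ ≤ C for all n ≥ 1. -/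
import Mathlib


attribute [local instance] Matrix.linftyOpNormedAddCommGroup Matrix.linftyOpNormedRing

/-- `prodAB A B n = (A n * B n) * ⋯ * (A 1 * B 1)`, with `prodAB A B 0 = 1`. -/
def prodAB {N M : ℕ} (A : ℕ → Matrix (Fin N) (Fin M) ℝ)
    (B : ℕ → Matrix (Fin M) (Fin N) ℝ) : ℕ → Matrix (Fin N) (Fin N) ℝ
  | 0 => 1
  | n + 1 => A (n + 1) * B (n + 1) * prodAB A B n

lemma prodAB_congr {N M : ℕ} {A A' : ℕ → Matrix (Fin N) (Fin M) ℝ}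
    {B B' : ℕ → Matrix (Fin M) (Fin N) ℝ} :
    ∀ n, (∀ i, 1 ≤ i → i ≤ n → A i = A' i ∧ B i = B' i) →
      prodAB A B n = prodAB A' B' n
  | 0, _ => rfl
  | n + 1, h => by
    have h1 := h (n + 1) (Nat.succ_le_succ (Nat.zero_le n)) le_rfl
    rw [prodAB, prodAB, h1.1, h1.2,
      prodAB_congr n (fun i hi1 hi2 => h i hi1 (le_trans hi2 (Nat.le_succ n)))]

lemma prodAB_shift {N M : ℕ} (A : ℕ → Matrix (Fin N) (Fin M) ℝ)
    (B : ℕ → Matrix (Fin M) (Fin N) ℝ) (s : ℕ) :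
    ∀ n, prodAB A B (n + s) =
      prodAB (fun k => A (k + s)) (fun k => B (k + s)) n * prodAB A B s
  | 0 => by simp [prodAB]
  | n + 1 => by
    have e : n + 1 + s = (n + s) + 1 := by omega
    rw [e, prodAB, prodAB_shift A B s n, prodAB]
    rw [show n + 1 + s = n + s + 1 from e, mul_assoc]

lemma prodAB_det_isUnit {N M : ℕ} {A : ℕ → Matrix (Fin N) (Fin M) ℝ}
    {B : ℕ → Matrix (Fin M) (Fin N) ℝ} :
    ∀ n, (∀ i, 1 ≤ i → i ≤ n → IsUnit (A i * B i).det) →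
      IsUnit (prodAB A B n).det
  | 0, _ => by simp [prodAB]
  | n + 1, h => by
    rw [prodAB, Matrix.det_mul]
    exact (h (n + 1) (Nat.succ_le_succ (Nat.zero_le n)) le_rfl).mul
      (prodAB_det_isUnit n (fun i hi1 hi2 => h i hi1 (le_trans hi2 (Nat.le_succ n))))

lemma prodAB_inv_norm {N M : ℕ} {A : ℕ → Matrix (Fin N) (Fin M) ℝ}
    {B : ℕ → Matrix (Fin M) (Fin N) ℝ} {c : ℝ} (hc0 : 0 ≤ c) :
    ∀ n, (∀ i, 1 ≤ i → i ≤ n → ‖(A i * B i)⁻¹‖ ≤ c) →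
      ‖(prodAB A B n)⁻¹‖ ≤ ‖(1 : Matrix (Fin N) (Fin N) ℝ)‖ * c ^ n
  | 0, _ => by
    rw [prodAB, inv_one, pow_zero, mul_one]
  | n + 1, h => by
    rw [prodAB, Matrix.mul_inv_rev]
    calc ‖(prodAB A B n)⁻¹ * (A (n + 1) * B (n + 1))⁻¹‖
        ≤ ‖(prodAB A B n)⁻¹‖ * ‖(A (n + 1) * B (n + 1))⁻¹‖ := norm_mul_le _ _
      _ ≤ (‖(1 : Matrix (Fin N) (Fin N) ℝ)‖ * c ^ n) * c := by
          apply mul_le_mul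
          · exact prodAB_inv_norm hc0 n
              (fun i hi1 hi2 => h i hi1 (le_trans hi2 (Nat.le_succ n)))
          · exact h (n + 1) (Nat.succ_le_succ (Nat.zero_le n)) le_rfl
          · exact norm_nonneg _
          · positivity
      _ = ‖(1 : Matrix (Fin N) (Fin N) ℝ)‖ * c ^ (n + 1) := by ring

/-- Nondegenerate case: if `𝒜`, `ℬ` are finite sets of matrices with
`det (A * B) ≠ 0` for all `A ∈ 𝒜`, `B ∈ ℬ`, and every sequence with values in
`𝒜` is `ℬ`-right-bounded, then there is a universal constant `C > 0` such that
for every sequence `(A_n)` in `𝒜` there is a sequence `(B_n)` in `ℬ` with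
`‖A_n B_n ⋯ A_1 B_1‖ ≤ C` for all `n ≥ 1`. -/
theorem stmt10 {N M : ℕ} (𝒜 : Set (Matrix (Fin N) (Fin M) ℝ))
    (ℬ : Set (Matrix (Fin M) (Fin N) ℝ)) (h𝒜 : 𝒜.Finite) (hℬ : ℬ.Finite)
    (hdet : ∀ A ∈ 𝒜, ∀ B ∈ ℬ, (A * B).det ≠ 0)
    (hbd : ∀ A : ℕ → Matrix (Fin N) (Fin M) ℝ, (∀ n, A n ∈ 𝒜) →
      ∃ B : ℕ → Matrix (Fin M) (Fin N) ℝ, (∀ n, B n ∈ ℬ) ∧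
        ∃ C : ℝ, ∀ n, 1 ≤ n → ‖prodAB A B n‖ ≤ C) :
    ∃ C : ℝ, 0 < C ∧ ∀ A : ℕ → Matrix (Fin N) (Fin M) ℝ, (∀ n, A n ∈ 𝒜) →
      ∃ B : ℕ → Matrix (Fin M) (Fin N) ℝ, (∀ n, B n ∈ ℬ) ∧
        ∀ n, 1 ≤ n → ‖prodAB A B n‖ ≤ C := by
  rcases Set.eq_empty_or_nonempty 𝒜 with hAe | ⟨a₀, ha₀⟩
  · exact ⟨1, one_pos, fun A hA => absurd (hA 0) (by simp [hAe])⟩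
  haveI : Finite ↥𝒜 := h𝒜.to_subtype
  haveI : Finite ↥ℬ := hℬ.to_subtype
  haveI : Nonempty ↥𝒜 := ⟨⟨a₀, ha₀⟩⟩
  -- a uniform bound on norms of inverses
  obtain ⟨c, hc⟩ : ∃ c : ℝ, ∀ p ∈ 𝒜 ×ˢ ℬ, ‖(p.1 * p.2)⁻¹‖ ≤ c := by
    obtain ⟨c, hc⟩ := ((h𝒜.prod hℬ).image (fun p => ‖(p.1 * p.2)⁻¹‖)).bddAbove
    exact ⟨c, fun p hp => hc (Set.mem_image_of_mem _ hp)⟩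
  have hc0 : 0 ≤ c := by
    obtain ⟨B0, hB0, -⟩ := hbd (fun _ => a₀) (fun _ => ha₀)
    exact le_trans (norm_nonneg _) (hc (a₀, B0 0) ⟨ha₀, hB0 0⟩)
  -- the Baire category argument
  let g : (ℕ → ↥𝒜) × (ℕ → ↥ℬ) → ℕ → Matrix (Fin N) (Fin N) ℝ := fun p n =>
    prodAB (fun k => (p.1 k : Matrix (Fin N) (Fin M) ℝ))
      (fun k => (p.2 k : Matrix (Fin M) (Fin N) ℝ)) n
  let K : ℕ → Set ((ℕ → ↥𝒜) × (ℕ → ↥ℬ)) := fun C => {p | ∀ n, 1 ≤ n → ‖g p n‖ ≤ C}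
  have hKclosed : ∀ C, IsClosed (K C) := by
    intro C
    rw [← isOpen_compl_iff, isOpen_iff_mem_nhds]
    intro p hp
    simp only [K, Set.mem_compl_iff, Set.mem_setOf_eq, not_forall] at hp
    obtain ⟨n, hn1, hn⟩ := hp
    have hV : IsOpen {q : (ℕ → ↥𝒜) × (ℕ → ↥ℬ) |
        ∀ i ∈ Finset.range (n + 1), q.1 i = p.1 i ∧ q.2 i = p.2 i} := by
      have : {q : (ℕ → ↥𝒜) × (ℕ → ↥ℬ) |
          ∀ i ∈ Finset.range (n + 1), q.1 i = p.1 i ∧ q.2 i = p.2 i} =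
          ⋂ i ∈ Finset.range (n + 1),
            ((fun q : (ℕ → ↥𝒜) × (ℕ → ↥ℬ) => q.1 i) ⁻¹' {p.1 i} ∩
             (fun q : (ℕ → ↥𝒜) × (ℕ → ↥ℬ) => q.2 i) ⁻¹' {p.2 i}) := by
        ext q; simp [Set.mem_iInter]
      rw [this]
      refine isOpen_biInter_finset (fun i _ => IsOpen.inter ?_ ?_)
      · exact (isOpen_discrete _).preimage ((continuous_apply i).comp continuous_fst)
      · exact (isOpen_discrete _).preimage ((continuous_apply i).comp continuous_snd)
    refine Filter.mem_of_superset (hV.mem_nhds (by simp)) ?_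
    intro q hq
    simp only [K, Set.mem_compl_iff, Set.mem_setOf_eq, not_forall]
    refine ⟨n, hn1, ?_⟩
    have : g q n = g p n := by
      refine prodAB_congr n (fun i hi1 hi2 => ?_)
      have h := hq i (Finset.mem_range.mpr (by omega))
      exact ⟨congrArg _ h.1, congrArg _ h.2⟩
    rw [this]; exact hn
  -- the projected sets cover everything
  let S : ℕ → Set (ℕ → ↥𝒜) := fun C => Prod.fst '' K C
  have hSclosed : ∀ C, IsClosed (S C) :=
    fun C => isClosedMap_fst_of_compactSpace _ (hKclosed C)
  have hScover : ⋃ C, S C = Set.univ := by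
    ext A
    simp only [Set.mem_iUnion, Set.mem_univ, iff_true]
    obtain ⟨B, hB, C, hC⟩ := hbd (fun n => (A n : Matrix (Fin N) (Fin M) ℝ)) (fun n => (A n).2)
    refine ⟨⌈C⌉₊, (A, fun n => ⟨B n, hB n⟩), fun n hn => ?_, rfl⟩
    exact le_trans (hC n hn) (Nat.le_ceil C)
  obtain ⟨C, A₀, hA₀⟩ := nonempty_interior_of_iUnion_of_closed hSclosed hScover
  obtain ⟨I, u, hu, hsub⟩ := (isOpen_pi_iff.mp isOpen_interior) A₀ hA₀
  set s : ℕ := I.sup id with hs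
  -- the universal constant
  refine ⟨max ((C : ℝ) * (‖(1 : Matrix (Fin N) (Fin N) ℝ)‖ * c ^ s)) 1,
    lt_of_lt_of_le one_pos (le_max_right _ _), ?_⟩
  intro A hA
  -- prepend the cylinder prefix
  set A' : ℕ → Matrix (Fin N) (Fin M) ℝ :=
    fun n => if n ≤ s then (A₀ n : Matrix (Fin N) (Fin M) ℝ) else A (n - s) with hA'
  have hA'mem : ∀ n, A' n ∈ 𝒜 := by
    intro n
    rw [hA']
    dsimp only
    split
    · exact (A₀ n).2
    · exact hA _
  have hA'tail : ∀ k, 1 ≤ k → A' (k + s) = A k := by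
    intro k hk
    rw [hA']
    dsimp only
    rw [if_neg (by omega), Nat.add_sub_cancel]
  -- it lies in the cylinder, hence in S C
  have hmem : (fun n => (⟨A' n, hA'mem n⟩ : ↥𝒜)) ∈ S C := by
    apply interior_subset
    apply hsub
    intro i hi
    have his : i ≤ s := Finset.le_sup (f := id) hi
    have : (⟨A' i, hA'mem i⟩ : ↥𝒜) = A₀ i := by
      apply Subtype.ext
      show A' i = (A₀ i : Matrix (Fin N) (Fin M) ℝ)
      rw [hA']; dsimp only; rw [if_pos his]
    show (⟨A' i, hA'mem i⟩ : ↥𝒜) ∈ u i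
    rw [this]
    exact (hu i hi).2
  obtain ⟨p, hpK, hp1⟩ := hmem
  set B' : ℕ → Matrix (Fin M) (Fin N) ℝ := fun n => (p.2 n : Matrix (Fin M) (Fin N) ℝ) with hB'
  have hB'mem : ∀ n, B' n ∈ ℬ := fun n => (p.2 n).2
  have hbound : ∀ n, 1 ≤ n → ‖prodAB A' B' n‖ ≤ (C : ℝ) := by
    intro n hn
    have := hpK n hn
    have hg : g p n = prodAB A' B' n := by
      refine prodAB_congr n (fun i hi1 hi2 => ⟨?_, rfl⟩)
      have : p.1 i = ⟨A' i, hA'mem i⟩ := by rw [hp1]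
      rw [this]
    rw [hg] at this
    exact this
  -- the fixed prefix product and its inverse
  set Q : Matrix (Fin N) (Fin N) ℝ := prodAB A' B' s with hQ
  have hQdet : IsUnit Q.det := by
    refine prodAB_det_isUnit s (fun i hi1 hi2 => ?_)
    exact isUnit_iff_ne_zero.mpr (hdet _ (hA'mem i) _ (hB'mem i))
  have hQinv : ‖Q⁻¹‖ ≤ ‖(1 : Matrix (Fin N) (Fin N) ℝ)‖ * c ^ s := by
    refine prodAB_inv_norm hc0 s (fun i hi1 hi2 => ?_)
    exact hc (A' i, B' i) ⟨hA'mem i, hB'mem i⟩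
  -- the chosen B sequence
  refine ⟨fun k => B' (k + s), fun k => hB'mem _, ?_⟩
  intro n hn
  have key : prodAB A (fun k => B' (k + s)) n = prodAB A' B' (n + s) * Q⁻¹ := by
    have hsh := prodAB_shift A' B' s n
    have hcg : prodAB (fun k => A' (k + s)) (fun k => B' (k + s)) n =
        prodAB A (fun k => B' (k + s)) n :=
      prodAB_congr n (fun i hi1 hi2 => ⟨hA'tail i hi1, rfl⟩)
    rw [hcg] at hsh
    calc prodAB A (fun k => B' (k + s)) n
        = prodAB A (fun k => B' (k + s)) n * (Q * Q⁻¹) := by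
          rw [Matrix.mul_nonsing_inv _ hQdet, mul_one]
      _ = (prodAB A (fun k => B' (k + s)) n * Q) * Q⁻¹ := by rw [mul_assoc]
      _ = prodAB A' B' (n + s) * Q⁻¹ := by rw [← hsh]
  rw [key]
  refine le_trans (norm_mul_le _ _) (le_trans ?_ (le_max_left _ _))
  have h1 : ‖prodAB A' B' (n + s)‖ ≤ (C : ℝ) := hbound (n + s) (by omega)
  exact mul_le_mul h1 hQinv (norm_nonneg _) (Nat.cast_nonneg C)
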